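/- Bootstrap consistency in Wasserstein-2: Let Δ₀ be a compact subset of the Wasserstein-2 space of distributions on R (with arbitrary mean), and let F_n ∈ Δ₀ be a sequence. Let X_1,…,X_n be i.i.d. F_n and let F̂_n be their empirical distribution. Then ρ₂(F_n, F̂_n) → 0 in probability. -/

import Mathlib

open MeasureTheory Filter Set
open scoped ENNReal

/-- A coupling of two measures on `ℝ`. -/
def IsCoupling (π : Measure (ℝ × ℝ)) (μ ν : Measure ℝ) : Prop :=
  π.map Prod.fst = μ ∧ π.map Prod.snd = ν

/-- The 2-Wasserstein distance between measures on `ℝ`. -/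
noncomputable def W2 (μ ν : Measure ℝ) : ℝ :=
  sInf ((fun π => (∫ p, (p.1 - p.2) ^ 2 ∂π) ^ ((1:ℝ)/2)) ''
    {π : Measure (ℝ × ℝ) | IsCoupling π μ ν})

/-- Membership in the Wasserstein-2 space over `ℝ`. -/
def MemW2Space (μ : Measure ℝ) : Prop :=
  IsProbabilityMeasure μ ∧ Integrable (fun x => x ^ 2) μ

/-- `Δ₀` is (sequentially) compact for the Wasserstein-2 metric. -/
def W2Compact (Δ₀ : Set (Measure ℝ)) : Prop :=
  (∀ μ ∈ Δ₀, MemW2Space μ) ∧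
  ∀ F : ℕ → Measure ℝ, (∀ n, F n ∈ Δ₀) →
    ∃ φ : ℕ → ℕ, StrictMono φ ∧ ∃ μ ∈ Δ₀, Tendsto (fun k => W2 (F (φ k)) μ) atTop (nhds 0)

/-- The empirical measure of the sample `ω : Fin n → ℝ`. -/
noncomputable def empiricalMeasure (n : ℕ) (ω : Fin n → ℝ) : Measure ℝ :=
  ((n : ENNReal)⁻¹) • ∑ i : Fin n, Measure.dirac (ω i)

noncomputable def cost (π : Measure (ℝ × ℝ)) : ℝ≥0∞ :=
  ∫⁻ p, ENNReal.ofReal ((p.1 - p.2) ^ 2) ∂π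

lemma W2_set_bddBelow (μ ν : Measure ℝ) :
    BddBelow ((fun π => (∫ p, (p.1 - p.2) ^ 2 ∂π) ^ ((1:ℝ)/2)) ''
      {π : Measure (ℝ × ℝ) | IsCoupling π μ ν}) := by
  refine ⟨0, fun r hr => ?_⟩
  obtain ⟨π, -, rfl⟩ := hr
  exact Real.rpow_nonneg (integral_nonneg fun p => sq_nonneg _) _

lemma integral_cost_eq (π : Measure (ℝ × ℝ)) :
    ∫ p, (p.1 - p.2) ^ 2 ∂π = (cost π).toReal := by
  rw [integral_eq_lintegral_of_nonneg_ae (Filter.Eventually.of_forall fun p => sq_nonneg _)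
    (show Measurable (fun p : ℝ × ℝ => (p.1 - p.2) ^ 2) by fun_prop).aestronglyMeasurable]
  rfl

lemma W2_le_of_coupling {μ ν : Measure ℝ} {π : Measure (ℝ × ℝ)} (h : IsCoupling π μ ν)
    {c : ℝ} (hc : 0 ≤ c) (hcost : cost π ≤ ENNReal.ofReal c) :
    W2 μ ν ≤ Real.sqrt c := by
  have h1 : W2 μ ν ≤ (∫ p, (p.1 - p.2) ^ 2 ∂π) ^ ((1:ℝ)/2) :=
    csInf_le (W2_set_bddBelow μ ν) ⟨π, h, rfl⟩
  have h2 : ∫ p, (p.1 - p.2) ^ 2 ∂π ≤ c := by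
    rw [integral_cost_eq]
    exact ENNReal.toReal_le_of_le_ofReal hc hcost
  calc W2 μ ν ≤ (∫ p, (p.1 - p.2) ^ 2 ∂π) ^ ((1:ℝ)/2) := h1
    _ ≤ c ^ ((1:ℝ)/2) :=
        Real.rpow_le_rpow (integral_nonneg fun p => sq_nonneg _) h2 (by norm_num)
    _ = Real.sqrt c := (Real.sqrt_eq_rpow c).symm

lemma W2_lt_of_coupling {μ ν : Measure ℝ} {π : Measure (ℝ × ℝ)} (h : IsCoupling π μ ν)
    {c ε : ℝ} (hc : 0 ≤ c) (hε : c < ε ^ 2) (hε0 : 0 < ε)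
    (hcost : cost π ≤ ENNReal.ofReal c) : W2 μ ν < ε :=
  lt_of_le_of_lt (W2_le_of_coupling h hc hcost) ((Real.sqrt_lt' hε0).2 hε)


lemma pi_map_eval {n : ℕ} (μ : Measure ℝ) [IsProbabilityMeasure μ] (i : Fin n) :
    (Measure.pi fun _ : Fin n => μ).map (fun ω => ω i) = μ := by
  ext s hs
  rw [Measure.map_apply (measurable_pi_apply i) hs]
  have : (fun ω : Fin n → ℝ => ω i) ⁻¹' s = Set.pi univ (Function.update (fun _ => univ) i s) := by
    classical
    exact Set.eval_preimage
  rw [this, Measure.pi_pi]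
  classical
  have : ∀ j, μ (Function.update (fun _ : Fin n => (univ : Set ℝ)) i s j)
      = if j = i then μ s else 1 := by
    intro j
    by_cases hj : j = i
    · subst hj; simp
    · simp [Function.update_of_ne hj, measure_univ, hj]
  rw [Finset.prod_congr rfl fun j _ => this j]
  simp

lemma lintegral_eval {n : ℕ} (μ : Measure ℝ) [IsProbabilityMeasure μ] (i : Fin n)
    {g : ℝ → ℝ≥0∞} (hg : Measurable g) :
    ∫⁻ ω, g (ω i) ∂(Measure.pi fun _ : Fin n => μ) = ∫⁻ x, g x ∂μ := by
  conv_rhs => rw [← pi_map_eval (n := n) μ i]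
  rw [lintegral_map hg (measurable_pi_apply i)]

lemma integral_eval {n : ℕ} (μ : Measure ℝ) [IsProbabilityMeasure μ] (i : Fin n)
    {g : ℝ → ℝ} (hg : Measurable g) :
    ∫ ω, g (ω i) ∂(Measure.pi fun _ : Fin n => μ) = ∫ x, g x ∂μ := by
  conv_rhs => rw [← pi_map_eval (n := n) μ i]
  rw [integral_map (measurable_pi_apply i).aemeasurable hg.aestronglyMeasurable]

lemma integral_pi_prod {n : ℕ} (μ : Measure ℝ) [IsProbabilityMeasure μ] (f : Fin n → ℝ → ℝ) :
    ∫ ω, ∏ i, f i (ω i) ∂(Measure.pi fun _ : Fin n => μ) = ∏ i, ∫ x, f i x ∂μ := by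
  letI : MeasureSpace ℝ := ⟨μ⟩
  haveI : SigmaFinite (volume : Measure ℝ) := by
    show SigmaFinite μ; infer_instance
  have := MeasureTheory.integral_fin_nat_prod_eq_prod (𝕜 := ℝ) (E := fun _ : Fin n => ℝ) (μ := fun _ : Fin n => μ) f
  simpa [MeasureTheory.volume_pi] using this


lemma chebyshev_prop {n : ℕ} (hn : 0 < n) (μ : Measure ℝ) [IsProbabilityMeasure μ]
    {s : Set ℝ} (hs : MeasurableSet s) {c : ℝ} (hc : 0 < c) :
    (Measure.pi fun _ : Fin n => μ)
      {ω | c ≤ |(μ s).toReal - (∑ i, s.indicator (fun _ => (1:ℝ)) (ω i)) / n|}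
      ≤ ENNReal.ofReal (1 / (n * c ^ 2)) := by
  classical
  set a : ℝ := (μ s).toReal with ha
  set g : ℝ → ℝ := fun x => s.indicator (fun _ => (1:ℝ)) x - a with hg
  have hgmeas : Measurable g := by
    exact (measurable_const.indicator hs).sub measurable_const
  have hgint : ∫ x, g x ∂μ = 0 := by
    rw [hg]
    simp only []
    rw [integral_sub ((integrable_indicator_iff hs).2 (integrableOn_const (measure_ne_top μ s) (by simp))) (integrable_const a)]
    rw [integral_indicator_const _ hs]
    simp [ha, measureReal_def]
  have hgbd : ∀ x, |g x| ≤ 1 := by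
    intro x
    have h1 : (0:ℝ) ≤ a := ENNReal.toReal_nonneg
    have h2 : a ≤ 1 := by
      rw [ha]
      exact ENNReal.toReal_le_of_le_ofReal zero_le_one (by simpa using prob_le_one (μ := μ) (s := s))
    by_cases hx : x ∈ s <;> simp [hg, indicator_of_mem, indicator_of_notMem, hx, abs_le] <;> constructor <;> linarith
  -- the sum variable
  set h : (Fin n → ℝ) → ℝ := fun ω => (∑ i, g (ω i)) ^ 2 with hh
  have hhmeas : Measurable h := by
    apply Measurable.pow_const
    exact Finset.measurable_sum _ fun i _ => hgmeas.comp (measurable_pi_apply i)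
  have hhnonneg : ∀ ω, 0 ≤ h ω := fun ω => sq_nonneg _
  -- expectation of h is at most n
  have hint : ∫ ω, h ω ∂(Measure.pi fun _ : Fin n => μ) ≤ n := by
    have expand : ∀ ω : Fin n → ℝ, h ω = ∑ i : Fin n, ∑ k : Fin n, g (ω i) * g (ω k) := by
      intro ω
      show (∑ i : Fin n, g (ω i)) ^ 2 = _
      rw [sq, Finset.sum_mul_sum]
    have hterm_int : ∀ (i k : Fin n), Integrable (fun ω : Fin n → ℝ => g (ω i) * g (ω k))
        (Measure.pi fun _ : Fin n => μ) := by
      intro i k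
      refine Integrable.mono' (integrable_const 1) ?_ (Filter.Eventually.of_forall fun ω => ?_)
      · exact ((hgmeas.comp (measurable_pi_apply i)).mul
          (hgmeas.comp (measurable_pi_apply k))).aestronglyMeasurable
      · rw [Real.norm_eq_abs, abs_mul]
        calc |g (ω i)| * |g (ω k)| ≤ 1 * 1 :=
              mul_le_mul (hgbd _) (hgbd _) (abs_nonneg _) zero_le_one
          _ = 1 := one_mul 1
    calc ∫ ω, h ω ∂(Measure.pi fun _ : Fin n => μ)
        = ∑ i : Fin n, ∑ k : Fin n, ∫ ω, g (ω i) * g (ω k) ∂(Measure.pi fun _ : Fin n => μ) := by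
          simp_rw [expand]
          rw [integral_finset_sum _ fun i _ => integrable_finset_sum _ fun k _ => hterm_int i k]
          exact Finset.sum_congr rfl fun i _ => integral_finset_sum _ fun k _ => hterm_int i k
      _ = ∑ i : Fin n, ∑ k : Fin n, (if k = i then ∫ x, g x ^ 2 ∂μ else 0) := by
          refine Finset.sum_congr rfl fun i _ => Finset.sum_congr rfl fun k _ => ?_
          by_cases hik : k = i
          · subst hik
            rw [if_pos rfl]
            have : ∀ ω : Fin n → ℝ, g (ω k) * g (ω k) = (fun x => g x ^ 2) (ω k) := by
              intro ω; simp [sq]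
            simp_rw [this]
            exact integral_eval μ k (hgmeas.pow_const 2)
          · rw [if_neg hik]
            set f : Fin n → ℝ → ℝ := fun m x => if m = i ∨ m = k then g x else 1 with hf
            have key : ∀ ω : Fin n → ℝ, g (ω i) * g (ω k) = ∏ l, f l (ω l) := by
              intro ω
              rw [← Finset.mul_prod_erase Finset.univ _ (Finset.mem_univ i)]
              have hk : k ∈ Finset.univ.erase i := Finset.mem_erase.2 ⟨hik, Finset.mem_univ k⟩
              rw [← Finset.mul_prod_erase _ _ hk]
              have h1 : ∏ l ∈ (Finset.univ.erase i).erase k, f l (ω l) = 1 := by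
                refine Finset.prod_eq_one fun l hl => ?_
                have hlk : l ≠ k := (Finset.mem_erase.1 hl).1
                have hli : l ≠ i := (Finset.mem_erase.1 (Finset.mem_erase.1 hl).2).1
                simp [hf, hli, hlk]
              rw [h1]
              have h2 : f i (ω i) = g (ω i) := by simp [hf]
              have h3 : f k (ω k) = g (ω k) := by simp [hf]
              rw [h2, h3, mul_one]
            simp_rw [key]
            rw [integral_pi_prod]
            refine Finset.prod_eq_zero (Finset.mem_univ i) ?_
            simp [hf, hgint]
      _ = ∑ i : Fin n, ∫ x, g x ^ 2 ∂μ := by simp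
      _ ≤ ∑ i : Fin n, 1 := by
          refine Finset.sum_le_sum fun i _ => ?_
          calc ∫ x, g x ^ 2 ∂μ ≤ ∫ _x, (1:ℝ) ∂μ := by
                refine integral_mono_of_nonneg (Filter.Eventually.of_forall fun x => sq_nonneg _)
                  (integrable_const 1) (Filter.Eventually.of_forall fun x => ?_)
                have h2 := abs_le.mp (hgbd x)
                show g x ^ 2 ≤ 1
                nlinarith [h2.1, h2.2]
            _ = 1 := by simp
      _ = n := by simp
  -- event inclusion
  have hincl : {ω : Fin n → ℝ | c ≤ |a - (∑ i, s.indicator (fun _ => (1:ℝ)) (ω i)) / n|}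
      ⊆ {ω : Fin n → ℝ | ENNReal.ofReal ((n * c) ^ 2) ≤ ENNReal.ofReal (h ω)} := by
    intro ω hω
    simp only [mem_setOf_eq] at hω ⊢
    have hsum : ∑ i, g (ω i) = (∑ i, s.indicator (fun _ => (1:ℝ)) (ω i)) - n * a := by
      rw [hg]
      simp [Finset.sum_sub_distrib, mul_comm]
    have habs : n * c ≤ |∑ i, g (ω i)| := by
      rw [hsum]
      have h1 : |a - (∑ i, s.indicator (fun _ => (1:ℝ)) (ω i)) / n| * n
          ≤ |(∑ i, s.indicator (fun _ => (1:ℝ)) (ω i)) - n * a| := by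
        have hn' : (0:ℝ) < n := by exact_mod_cast hn
        rw [← abs_of_pos hn', ← abs_mul]
        rw [abs_of_pos hn']
        have : (a - (∑ i, s.indicator (fun _ => (1:ℝ)) (ω i)) / n) * n
            = -((∑ i, s.indicator (fun _ => (1:ℝ)) (ω i)) - n * a) := by
          field_simp
          ring
        rw [this, abs_neg]
      have hn' : (0:ℝ) < n := by exact_mod_cast hn
      calc n * c = c * n := mul_comm _ _
        _ ≤ |a - (∑ i, s.indicator (fun _ => (1:ℝ)) (ω i)) / n| * n :=
            mul_le_mul_of_nonneg_right hω hn'.le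
        _ ≤ _ := h1
    refine ENNReal.ofReal_le_ofReal ?_
    calc (n * c) ^ 2 ≤ |∑ i, g (ω i)| ^ 2 := by
          have hnc : (0:ℝ) ≤ n * c := by positivity
          exact pow_le_pow_left₀ hnc habs 2
      _ = h ω := by rw [hh, sq_abs]
  -- Markov
  have hmarkov := meas_ge_le_lintegral_div (μ := Measure.pi fun _ : Fin n => μ)
    (f := fun ω => ENNReal.ofReal (h ω))
    ((ENNReal.measurable_ofReal.comp hhmeas).aemeasurable)
    (ε := ENNReal.ofReal ((n * c) ^ 2)) ?_ ?_
  · refine le_trans (measure_mono hincl) (le_trans hmarkov ?_)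
    have hlint : ∫⁻ ω, ENNReal.ofReal (h ω) ∂(Measure.pi fun _ : Fin n => μ)
        ≤ ENNReal.ofReal n := by
      have hint' : Integrable h (Measure.pi fun _ : Fin n => μ) := by
        refine Integrable.mono' (integrable_const ((2 * (n:ℝ)) ^ 2)) hhmeas.aestronglyMeasurable
          (Filter.Eventually.of_forall fun ω => ?_)
        rw [Real.norm_eq_abs, abs_of_nonneg (hhnonneg ω)]
        show (∑ i : Fin n, g (ω i)) ^ 2 ≤ (2 * (n:ℝ)) ^ 2
        have : |∑ i, g (ω i)| ≤ 2 * n := by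
          calc |∑ i, g (ω i)| ≤ ∑ i, |g (ω i)| := Finset.abs_sum_le_sum_abs _ _
            _ ≤ ∑ _i : Fin n, (2:ℝ) := Finset.sum_le_sum fun i _ => le_trans (hgbd _) one_le_two
            _ = 2 * n := by simp [mul_comm]
        calc (∑ i : Fin n, g (ω i)) ^ 2 = |∑ i, g (ω i)| ^ 2 := (sq_abs _).symm
          _ ≤ (2 * n) ^ 2 := pow_le_pow_left₀ (abs_nonneg _) this 2
      rw [← ofReal_integral_eq_lintegral_ofReal hint'
        (Filter.Eventually.of_forall hhnonneg)]
      exact ENNReal.ofReal_le_ofReal hint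
    refine le_trans (ENNReal.div_le_div_right hlint _) ?_
    rw [← ENNReal.ofReal_div_of_pos (by positivity)]
    refine ENNReal.ofReal_le_ofReal ?_
    have hn' : (0:ℝ) < n := by exact_mod_cast hn
    have : (n:ℝ) / ((n:ℝ) * c) ^ 2 = 1 / ((n:ℝ) * c ^ 2) := by
      field_simp
    rw [this]
  · positivity
  · exact ENNReal.ofReal_ne_top


lemma map_finset_sum' {α β : Type*} [MeasurableSpace α] [MeasurableSpace β] {f : α → β}
    (hf : Measurable f) {ι : Type*} (t : Finset ι) (μ : ι → Measure α) :
    (∑ i ∈ t, μ i).map f = ∑ i ∈ t, (μ i).map f := by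
  classical
  induction t using Finset.induction_on with
  | empty => simp
  | insert j t' h ih => rw [Finset.sum_insert h, Measure.map_add _ _ hf, ih,
      Finset.sum_insert h]

lemma ennreal_sub_le_absdist {x y : ℝ≥0∞} (hx : x ≠ ∞) (hy : y ≠ ∞) :
    x - y ≤ ENNReal.ofReal |x.toReal - y.toReal| := by
  rcases le_total x y with h | h
  · simp [tsub_eq_zero_of_le h]
  · have h1 : x - y ≠ ∞ := by simp [ENNReal.sub_ne_top hx]
    rw [← ENNReal.ofReal_toReal h1, ENNReal.toReal_sub_of_le h hx]
    exact ENNReal.ofReal_le_ofReal (le_abs_self _)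

lemma coef_helper {A B Mm : ℝ≥0∞} (hA0 : A ≠ 0) (hA : A ≠ ∞) (hB0 : B ≠ 0) (hB : B ≠ ∞) :
    Mm / (A * B) * B = Mm / A := by
  rw [ENNReal.div_eq_inv_mul, ENNReal.mul_inv (Or.inl hA0) (Or.inl hA), ENNReal.div_eq_inv_mul]
  calc A⁻¹ * B⁻¹ * Mm * B = A⁻¹ * Mm * (B⁻¹ * B) := by ring
    _ = A⁻¹ * Mm := by rw [ENNReal.inv_mul_cancel hB0 hB, mul_one]

lemma exists_good_coupling (μ ν : Measure ℝ) [IsProbabilityMeasure μ] [IsProbabilityMeasure ν]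
    {K : ℕ} {s : Fin K → Set ℝ} (hmeas : ∀ j, MeasurableSet (s j))
    (hdisj : Pairwise (Function.onFun Disjoint s))
    {η M' : ℝ}
    (hdiam : ∀ j, ∀ x ∈ s j, ∀ y ∈ s j, (x - y) ^ 2 ≤ η ^ 2)
    (hbd : ∀ j, ∀ x ∈ s j, x ^ 2 ≤ M' ^ 2) :
    ∃ π, IsCoupling π μ ν ∧
      cost π ≤ ENNReal.ofReal (η ^ 2)
        + 4 * ENNReal.ofReal (M' ^ 2) *
            (∑ j, ENNReal.ofReal |(μ (s j)).toReal - (ν (s j)).toReal|)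
        + 2 * (∫⁻ x in (⋃ j, s j)ᶜ, ENNReal.ofReal (x ^ 2) ∂μ)
        + 2 * (∫⁻ x in (⋃ j, s j)ᶜ, ENNReal.ofReal (x ^ 2) ∂ν) := by
  classical
  set a : Fin K → ℝ≥0∞ := fun j => μ (s j) with ha
  set b : Fin K → ℝ≥0∞ := fun j => ν (s j) with hb
  set m : Fin K → ℝ≥0∞ := fun j => min (a j) (b j) with hm
  set T : Set ℝ := (⋃ j, s j)ᶜ with hT
  have hUmeas : MeasurableSet (⋃ j, s j) := MeasurableSet.iUnion hmeas
  have hTmeas : MeasurableSet T := hUmeas.compl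
  have ha_top : ∀ j, a j ≠ ∞ := fun j => measure_ne_top μ _
  have hb_top : ∀ j, b j ≠ ∞ := fun j => measure_ne_top ν _
  have hma : ∀ j, m j ≤ a j := fun j => min_le_left _ _
  have hmb : ∀ j, m j ≤ b j := fun j => min_le_right _ _
  set d : Fin K → ℝ≥0∞ := fun j => ENNReal.ofReal |(a j).toReal - (b j).toReal| with hd
  have hrd : ∀ j, a j - m j ≤ d j := by
    intro j
    rcases le_total (a j) (b j) with h | h
    · simp [hm, min_eq_left h, tsub_eq_zero_of_le]
    · rw [hm]
      simp only [min_eq_right h]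
      exact ennreal_sub_le_absdist (ha_top j) (hb_top j)
  have hsd : ∀ j, b j - m j ≤ d j := by
    intro j
    rcases le_total (b j) (a j) with h | h
    · rw [hm]
      simp only [min_eq_right h]
      simp
    · rw [hm]
      simp only [min_eq_left h]
      have := ennreal_sub_le_absdist (hb_top j) (ha_top j)
      rwa [abs_sub_comm] at this
  -- the leftover measures
  set μ' : Measure ℝ := (∑ j, ((a j - m j) / a j) • μ.restrict (s j)) + μ.restrict T with hμ'
  set ν' : Measure ℝ := (∑ j, ((b j - m j) / b j) • ν.restrict (s j)) + ν.restrict T with hν'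
  have hsum_a : ∑ j, a j + μ T = 1 := by
    have h1 : μ (⋃ j, s j) = ∑ j, a j := by
      rw [measure_iUnion hdisj hmeas, tsum_fintype]
    rw [← h1, measure_add_measure_compl hUmeas, measure_univ]
  have hsum_b : ∑ j, b j + ν T = 1 := by
    have h1 : ν (⋃ j, s j) = ∑ j, b j := by
      rw [measure_iUnion hdisj hmeas, tsum_fintype]
    rw [← h1, measure_add_measure_compl hUmeas, measure_univ]
  have hsm_top : ∑ j, m j ≠ ∞ := by
    refine (ENNReal.sum_lt_top.2 fun j _ => ?_).ne
    exact lt_of_le_of_lt (hma j) (lt_of_le_of_ne le_top (ha_top j))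
  -- total masses
  have hcoefa : ∀ j, (a j - m j) / a j * a j = a j - m j := by
    intro j
    by_cases h0 : a j = 0
    · have : m j = 0 := le_antisymm (h0 ▸ hma j) zero_le
      simp [h0, this]
    · exact ENNReal.div_mul_cancel h0 (ha_top j)
  have hcoefb : ∀ j, (b j - m j) / b j * b j = b j - m j := by
    intro j
    by_cases h0 : b j = 0
    · have : m j = 0 := le_antisymm (h0 ▸ hmb j) zero_le
      simp [h0, this]
    · exact ENNReal.div_mul_cancel h0 (hb_top j)
  have hμ'univ : μ' univ + ∑ j, m j = 1 := by
    have h1 : μ' univ = ∑ j, (a j - m j) + μ T := by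
      rw [hμ', Measure.add_apply, Measure.finset_sum_apply]
      congr 1
      · refine Finset.sum_congr rfl fun j _ => ?_
        rw [Measure.smul_apply, smul_eq_mul, Measure.restrict_apply_univ]
        exact hcoefa j
      · rw [Measure.restrict_apply_univ]
    rw [h1]
    calc ∑ j, (a j - m j) + μ T + ∑ j, m j = (∑ j, ((a j - m j) + m j)) + μ T := by
          rw [Finset.sum_add_distrib]; ring
      _ = ∑ j, a j + μ T := by
          congr 1
          exact Finset.sum_congr rfl fun j _ => tsub_add_cancel_of_le (hma j)
      _ = 1 := hsum_a
  have hν'univ : ν' univ + ∑ j, m j = 1 := by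
    have h1 : ν' univ = ∑ j, (b j - m j) + ν T := by
      rw [hν', Measure.add_apply, Measure.finset_sum_apply]
      congr 1
      · refine Finset.sum_congr rfl fun j _ => ?_
        rw [Measure.smul_apply, smul_eq_mul, Measure.restrict_apply_univ]
        exact hcoefb j
      · rw [Measure.restrict_apply_univ]
    rw [h1]
    calc ∑ j, (b j - m j) + ν T + ∑ j, m j = (∑ j, ((b j - m j) + m j)) + ν T := by
          rw [Finset.sum_add_distrib]; ring
      _ = ∑ j, b j + ν T := by
          congr 1
          exact Finset.sum_congr rfl fun j _ => tsub_add_cancel_of_le (hmb j)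
      _ = 1 := hsum_b
  have hR_eq : ν' univ = μ' univ := by
    have h1 : ν' univ = 1 - ∑ j, m j := ENNReal.eq_sub_of_add_eq hsm_top hν'univ
    have h2 : μ' univ = 1 - ∑ j, m j := ENNReal.eq_sub_of_add_eq hsm_top hμ'univ
    rw [h1, h2]
  have hRle1 : μ' univ ≤ 1 := by
    calc μ' univ ≤ μ' univ + ∑ j, m j := le_self_add
      _ = 1 := hμ'univ
  have hR_top : μ' univ ≠ ∞ := (lt_of_le_of_lt hRle1 ENNReal.one_lt_top).ne
  haveI : IsFiniteMeasure μ' := ⟨lt_of_le_of_lt hRle1 ENNReal.one_lt_top⟩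
  haveI : IsFiniteMeasure ν' := ⟨by rw [hR_eq]; exact lt_of_le_of_lt hRle1 ENNReal.one_lt_top⟩
  -- the coupling
  set π : Measure (ℝ × ℝ) :=
    (∑ j, (m j / (a j * b j)) • ((μ.restrict (s j)).prod (ν.restrict (s j))))
      + (μ' univ)⁻¹ • μ'.prod ν' with hπ
  have hcoef1 : ∀ j, m j / (a j * b j) * b j = m j / a j := by
    intro j
    by_cases hb0 : b j = 0
    · have : m j = 0 := le_antisymm (hb0 ▸ hmb j) zero_le
      simp [hb0, this]
    · by_cases ha0 : a j = 0
      · have : m j = 0 := le_antisymm (ha0 ▸ hma j) zero_le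
        simp [ha0, this]
      · exact coef_helper ha0 (ha_top j) hb0 (hb_top j)
  have hcoef2 : ∀ j, m j / (a j * b j) * a j = m j / b j := by
    intro j
    by_cases ha0 : a j = 0
    · have : m j = 0 := le_antisymm (ha0 ▸ hma j) zero_le
      simp [ha0, this]
    · by_cases hb0 : b j = 0
      · have : m j = 0 := le_antisymm (hb0 ▸ hmb j) zero_le
        simp [hb0, this]
      · rw [mul_comm (a j) (b j)]
        exact coef_helper hb0 (hb_top j) ha0 (ha_top j)
  -- decomposition of μ and ν
  have hrestr_sum : ∀ (ρ : Measure ℝ), (∑ j, ρ.restrict (s j)) + ρ.restrict T = ρ := by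
    intro ρ
    have h1 : ρ.restrict (⋃ j, s j) = ∑ j, ρ.restrict (s j) := by
      rw [Measure.restrict_iUnion hdisj hmeas, Measure.sum_fintype]
    rw [← h1, hT, Measure.restrict_add_restrict_compl hUmeas]
  have hdecomp_μ : (∑ j, (m j / a j) • μ.restrict (s j)) + μ' = μ := by
    rw [hμ', ← add_assoc, ← Finset.sum_add_distrib]
    have h1 : ∀ j ∈ Finset.univ, ((m j / a j) • μ.restrict (s j)
        + ((a j - m j) / a j) • μ.restrict (s j)) = μ.restrict (s j) := by
      intro j _
      by_cases ha0 : a j = 0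
      · have h2 : μ.restrict (s j) = 0 := Measure.restrict_eq_zero.2 ha0
        simp [h2]
      · rw [← add_smul, ENNReal.div_add_div_same, add_tsub_cancel_of_le (hma j),
          ENNReal.div_self ha0 (ha_top j), one_smul]
    rw [Finset.sum_congr rfl h1]
    exact hrestr_sum μ
  have hdecomp_ν : (∑ j, (m j / b j) • ν.restrict (s j)) + ν' = ν := by
    rw [hν', ← add_assoc, ← Finset.sum_add_distrib]
    have h1 : ∀ j ∈ Finset.univ, ((m j / b j) • ν.restrict (s j)
        + ((b j - m j) / b j) • ν.restrict (s j)) = ν.restrict (s j) := by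
      intro j _
      by_cases hb0 : b j = 0
      · have h2 : ν.restrict (s j) = 0 := Measure.restrict_eq_zero.2 hb0
        simp [h2]
      · rw [← add_smul, ENNReal.div_add_div_same, add_tsub_cancel_of_le (hmb j),
          ENNReal.div_self hb0 (hb_top j), one_smul]
    rw [Finset.sum_congr rfl h1]
    exact hrestr_sum ν
  -- marginals
  have hrem_fst : ((μ' univ)⁻¹ • μ'.prod ν').map Prod.fst = μ' := by
    by_cases hR0 : μ' univ = 0
    · have h2 : μ' = 0 := Measure.measure_univ_eq_zero.1 hR0
      simp [h2]
    · rw [Measure.map_smul, Measure.map_fst_prod, hR_eq, smul_smul,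
        ENNReal.inv_mul_cancel hR0 hR_top, one_smul]
  have hrem_snd : ((μ' univ)⁻¹ • μ'.prod ν').map Prod.snd = ν' := by
    by_cases hR0 : μ' univ = 0
    · have h2 : μ' = 0 := Measure.measure_univ_eq_zero.1 hR0
      have h3 : ν' = 0 := Measure.measure_univ_eq_zero.1 (by rw [hR_eq, hR0])
      simp [h2, h3]
    · rw [Measure.map_smul, Measure.map_snd_prod, smul_smul,
        ENNReal.inv_mul_cancel hR0 hR_top, one_smul]
  have hfst : π.map Prod.fst = μ := by
    rw [hπ, Measure.map_add _ _ measurable_fst, map_finset_sum' measurable_fst, hrem_fst]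
    have h1 : ∀ j ∈ Finset.univ, ((m j / (a j * b j)) •
        ((μ.restrict (s j)).prod (ν.restrict (s j)))).map Prod.fst
        = (m j / a j) • μ.restrict (s j) := by
      intro j _
      rw [Measure.map_smul, Measure.map_fst_prod, Measure.restrict_apply_univ, smul_smul, hcoef1 j]
    rw [Finset.sum_congr rfl h1]
    exact hdecomp_μ
  have hsnd : π.map Prod.snd = ν := by
    rw [hπ, Measure.map_add _ _ measurable_snd, map_finset_sum' measurable_snd, hrem_snd]
    have h1 : ∀ j ∈ Finset.univ, ((m j / (a j * b j)) •
        ((μ.restrict (s j)).prod (ν.restrict (s j)))).map Prod.snd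
        = (m j / b j) • ν.restrict (s j) := by
      intro j _
      rw [Measure.map_smul, Measure.map_snd_prod, Measure.restrict_apply_univ, smul_smul, hcoef2 j]
    rw [Finset.sum_congr rfl h1]
    exact hdecomp_ν
  refine ⟨π, ⟨hfst, hsnd⟩, ?_⟩
  -- cost bound
  set f : ℝ × ℝ → ℝ≥0∞ := fun p => ENNReal.ofReal ((p.1 - p.2) ^ 2) with hf
  have hfmeas : Measurable f :=
    ENNReal.measurable_ofReal.comp ((measurable_fst.sub measurable_snd).pow_const 2)
  have hcost_split : cost π = (∑ j, (m j / (a j * b j)) *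
      ∫⁻ p, f p ∂((μ.restrict (s j)).prod (ν.restrict (s j))))
      + (μ' univ)⁻¹ * ∫⁻ p, f p ∂(μ'.prod ν') := by
    rw [cost, hπ, lintegral_add_measure, lintegral_finset_sum_measure]
    congr 1
    · exact Finset.sum_congr rfl fun j _ => lintegral_smul_measure _ _
    · exact lintegral_smul_measure _ _
  -- per-bin bound
  have hbin : ∀ j, ∫⁻ p, f p ∂((μ.restrict (s j)).prod (ν.restrict (s j)))
      ≤ ENNReal.ofReal (η ^ 2) * (a j * b j) := by
    intro j
    rw [Measure.prod_restrict]
    calc ∫⁻ p in (s j) ×ˢ (s j), f p ∂(μ.prod ν)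
        ≤ ∫⁻ _p in (s j) ×ˢ (s j), ENNReal.ofReal (η ^ 2) ∂(μ.prod ν) := by
          refine setLIntegral_mono measurable_const fun p hp => ?_
          exact ENNReal.ofReal_le_ofReal (hdiam j p.1 hp.1 p.2 hp.2)
      _ = ENNReal.ofReal (η ^ 2) * (a j * b j) := by
          rw [setLIntegral_const, Measure.prod_prod]
  have hbin_total : ∑ j, (m j / (a j * b j)) *
      ∫⁻ p, f p ∂((μ.restrict (s j)).prod (ν.restrict (s j)))
      ≤ ENNReal.ofReal (η ^ 2) := by
    have hsum_m_le : ∑ j, m j ≤ 1 := by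
      calc ∑ j, m j ≤ μ' univ + ∑ j, m j := le_add_self
        _ = 1 := hμ'univ
    calc ∑ j, (m j / (a j * b j)) * ∫⁻ p, f p ∂((μ.restrict (s j)).prod (ν.restrict (s j)))
        ≤ ∑ j, ENNReal.ofReal (η ^ 2) * m j := by
          refine Finset.sum_le_sum fun j _ => ?_
          calc (m j / (a j * b j)) * ∫⁻ p, f p ∂((μ.restrict (s j)).prod (ν.restrict (s j)))
              ≤ (m j / (a j * b j)) * (ENNReal.ofReal (η ^ 2) * (a j * b j)) :=
                mul_le_mul_right (hbin j) _
            _ = ENNReal.ofReal (η ^ 2) * ((a j * b j) * (m j / (a j * b j))) := by ring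
            _ ≤ ENNReal.ofReal (η ^ 2) * m j :=
                mul_le_mul_right ENNReal.mul_div_le _
      _ = ENNReal.ofReal (η ^ 2) * ∑ j, m j := by rw [Finset.mul_sum]
      _ ≤ ENNReal.ofReal (η ^ 2) * 1 := mul_le_mul_right hsum_m_le _
      _ = ENNReal.ofReal (η ^ 2) := mul_one _
  -- second moments of the remainders
  have hx2meas : Measurable (fun x : ℝ => ENNReal.ofReal (x ^ 2)) :=
    ENNReal.measurable_ofReal.comp (measurable_id.pow_const 2)
  have hmom : ∀ (ρ : Measure ℝ) (c : Fin K → ℝ≥0∞), (∀ j, c j ≤ d j) → (∀ j, c j ≤ ρ (s j)) →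
      ∫⁻ x, ENNReal.ofReal (x ^ 2)
        ∂((∑ j, (c j / ρ (s j)) • ρ.restrict (s j)) + ρ.restrict T)
      ≤ ENNReal.ofReal (M' ^ 2) * ∑ j, d j + ∫⁻ x in T, ENNReal.ofReal (x ^ 2) ∂ρ := by
    intro ρ c hcd hcρ
    rw [lintegral_add_measure, lintegral_finset_sum_measure]
    refine add_le_add ?_ le_rfl
    calc ∑ j, ∫⁻ x, ENNReal.ofReal (x ^ 2) ∂((c j / ρ (s j)) • ρ.restrict (s j))
        ≤ ∑ j, ENNReal.ofReal (M' ^ 2) * d j := by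
          refine Finset.sum_le_sum fun j _ => ?_
          rw [lintegral_smul_measure]
          have h1 : ∫⁻ x in s j, ENNReal.ofReal (x ^ 2) ∂ρ
              ≤ ENNReal.ofReal (M' ^ 2) * ρ (s j) := by
            calc ∫⁻ x in s j, ENNReal.ofReal (x ^ 2) ∂ρ
                ≤ ∫⁻ _x in s j, ENNReal.ofReal (M' ^ 2) ∂ρ :=
                  setLIntegral_mono measurable_const fun x hx =>
                    ENNReal.ofReal_le_ofReal (hbd j x hx)
              _ = ENNReal.ofReal (M' ^ 2) * ρ (s j) := setLIntegral_const _ _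
          calc (c j / ρ (s j)) * ∫⁻ x in s j, ENNReal.ofReal (x ^ 2) ∂ρ
              ≤ (c j / ρ (s j)) * (ENNReal.ofReal (M' ^ 2) * ρ (s j)) :=
                mul_le_mul_right h1 _
            _ = ENNReal.ofReal (M' ^ 2) * (ρ (s j) * (c j / ρ (s j))) := by ring
            _ ≤ ENNReal.ofReal (M' ^ 2) * c j := mul_le_mul_right ENNReal.mul_div_le _
            _ ≤ ENNReal.ofReal (M' ^ 2) * d j := mul_le_mul_right (hcd j) _
      _ = ENNReal.ofReal (M' ^ 2) * ∑ j, d j := by rw [Finset.mul_sum]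
  have hP : ∫⁻ x, ENNReal.ofReal (x ^ 2) ∂μ'
      ≤ ENNReal.ofReal (M' ^ 2) * ∑ j, d j + ∫⁻ x in T, ENNReal.ofReal (x ^ 2) ∂μ := by
    rw [hμ']
    exact hmom μ (fun j => a j - m j) hrd (fun j => tsub_le_self)
  have hQ : ∫⁻ x, ENNReal.ofReal (x ^ 2) ∂ν'
      ≤ ENNReal.ofReal (M' ^ 2) * ∑ j, d j + ∫⁻ x in T, ENNReal.ofReal (x ^ 2) ∂ν := by
    rw [hν']
    exact hmom ν (fun j => b j - m j) hsd (fun j => tsub_le_self)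
  -- remainder cost
  have hrem_cost : (μ' univ)⁻¹ * ∫⁻ p, f p ∂(μ'.prod ν')
      ≤ 2 * ∫⁻ x, ENNReal.ofReal (x ^ 2) ∂μ' + 2 * ∫⁻ x, ENNReal.ofReal (x ^ 2) ∂ν' := by
    have hm1 : Measurable fun p : ℝ × ℝ => 2 * ENNReal.ofReal (p.1 ^ 2) :=
      measurable_const.mul (hx2meas.comp measurable_fst)
    have hm2 : Measurable fun p : ℝ × ℝ => 2 * ENNReal.ofReal (p.2 ^ 2) :=
      measurable_const.mul (hx2meas.comp measurable_snd)
    have hpt : ∀ p : ℝ × ℝ, f p ≤ 2 * ENNReal.ofReal (p.1 ^ 2) + 2 * ENNReal.ofReal (p.2 ^ 2) := by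
      intro p
      have h1 : (p.1 - p.2) ^ 2 ≤ 2 * p.1 ^ 2 + 2 * p.2 ^ 2 := by nlinarith [sq_nonneg (p.1 + p.2)]
      calc f p ≤ ENNReal.ofReal (2 * p.1 ^ 2 + 2 * p.2 ^ 2) := ENNReal.ofReal_le_ofReal h1
        _ = ENNReal.ofReal (2 * p.1 ^ 2) + ENNReal.ofReal (2 * p.2 ^ 2) :=
            ENNReal.ofReal_add (by positivity) (by positivity)
        _ = 2 * ENNReal.ofReal (p.1 ^ 2) + 2 * ENNReal.ofReal (p.2 ^ 2) := by
            rw [ENNReal.ofReal_mul zero_le_two, ENNReal.ofReal_mul zero_le_two]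
            norm_num
    have hsplit : ∫⁻ p, f p ∂(μ'.prod ν')
        ≤ (2 * ∫⁻ x, ENNReal.ofReal (x ^ 2) ∂μ') * ν' univ
          + μ' univ * (2 * ∫⁻ x, ENNReal.ofReal (x ^ 2) ∂ν') := by
      calc ∫⁻ p, f p ∂(μ'.prod ν')
          ≤ ∫⁻ p, (2 * ENNReal.ofReal (p.1 ^ 2) + 2 * ENNReal.ofReal (p.2 ^ 2)) ∂(μ'.prod ν') :=
            lintegral_mono hpt
        _ = ∫⁻ p, 2 * ENNReal.ofReal (p.1 ^ 2) ∂(μ'.prod ν')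
            + ∫⁻ p, 2 * ENNReal.ofReal (p.2 ^ 2) ∂(μ'.prod ν') := by
            exact lintegral_add_left hm1 _
        _ = (2 * ∫⁻ x, ENNReal.ofReal (x ^ 2) ∂μ') * ν' univ
            + μ' univ * (2 * ∫⁻ x, ENNReal.ofReal (x ^ 2) ∂ν') := by
            congr 1
            · rw [MeasureTheory.lintegral_prod _ hm1.aemeasurable]
              calc ∫⁻ x, ∫⁻ _y, 2 * ENNReal.ofReal (x ^ 2) ∂ν' ∂μ'
                  = ∫⁻ x, (2 * ENNReal.ofReal (x ^ 2)) * ν' univ ∂μ' := by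
                    congr 1; ext x; rw [lintegral_const]
                _ = (∫⁻ x, 2 * ENNReal.ofReal (x ^ 2) ∂μ') * ν' univ :=
                    lintegral_mul_const _ (measurable_const.mul hx2meas)
                _ = (2 * ∫⁻ x, ENNReal.ofReal (x ^ 2) ∂μ') * ν' univ := by
                    rw [lintegral_const_mul _ hx2meas]
            · rw [MeasureTheory.lintegral_prod _ hm2.aemeasurable]
              calc ∫⁻ x, ∫⁻ y, 2 * ENNReal.ofReal (y ^ 2) ∂ν' ∂μ'
                  = ∫⁻ _x, 2 * ∫⁻ y, ENNReal.ofReal (y ^ 2) ∂ν' ∂μ' := by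
                    congr 1; ext x; rw [lintegral_const_mul _ hx2meas]
                _ = μ' univ * (2 * ∫⁻ y, ENNReal.ofReal (y ^ 2) ∂ν') := by
                    rw [lintegral_const]; ring
    calc (μ' univ)⁻¹ * ∫⁻ p, f p ∂(μ'.prod ν')
        ≤ (μ' univ)⁻¹ * ((2 * ∫⁻ x, ENNReal.ofReal (x ^ 2) ∂μ') * ν' univ
          + μ' univ * (2 * ∫⁻ x, ENNReal.ofReal (x ^ 2) ∂ν')) := mul_le_mul_right hsplit _
      _ = (2 * ∫⁻ x, ENNReal.ofReal (x ^ 2) ∂μ') * (μ' univ * (μ' univ)⁻¹)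
          + (2 * ∫⁻ x, ENNReal.ofReal (x ^ 2) ∂ν') * (μ' univ * (μ' univ)⁻¹) := by
          rw [hR_eq]; ring
      _ ≤ (2 * ∫⁻ x, ENNReal.ofReal (x ^ 2) ∂μ') * 1
          + (2 * ∫⁻ x, ENNReal.ofReal (x ^ 2) ∂ν') * 1 := by
          refine add_le_add (mul_le_mul_right (ENNReal.mul_inv_le_one _) _)
            (mul_le_mul_right (ENNReal.mul_inv_le_one _) _)
      _ = 2 * ∫⁻ x, ENNReal.ofReal (x ^ 2) ∂μ' + 2 * ∫⁻ x, ENNReal.ofReal (x ^ 2) ∂ν' := by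
          rw [mul_one, mul_one]
  -- put everything together
  rw [hcost_split]
  calc (∑ j, (m j / (a j * b j)) *
      ∫⁻ p, f p ∂((μ.restrict (s j)).prod (ν.restrict (s j))))
      + (μ' univ)⁻¹ * ∫⁻ p, f p ∂(μ'.prod ν')
      ≤ ENNReal.ofReal (η ^ 2) + (2 * ∫⁻ x, ENNReal.ofReal (x ^ 2) ∂μ'
        + 2 * ∫⁻ x, ENNReal.ofReal (x ^ 2) ∂ν') := add_le_add hbin_total hrem_cost
    _ ≤ ENNReal.ofReal (η ^ 2)
        + (2 * (ENNReal.ofReal (M' ^ 2) * ∑ j, d j + ∫⁻ x in T, ENNReal.ofReal (x ^ 2) ∂μ)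
        + 2 * (ENNReal.ofReal (M' ^ 2) * ∑ j, d j + ∫⁻ x in T, ENNReal.ofReal (x ^ 2) ∂ν)) := by
        exact add_le_add le_rfl (add_le_add (mul_le_mul_right hP _) (mul_le_mul_right hQ _))
    _ = ENNReal.ofReal (η ^ 2) + 4 * ENNReal.ofReal (M' ^ 2) * (∑ j, d j)
        + 2 * (∫⁻ x in T, ENNReal.ofReal (x ^ 2) ∂μ)
        + 2 * (∫⁻ x in T, ENNReal.ofReal (x ^ 2) ∂ν) := by ring


noncomputable def tail (μ : Measure ℝ) (M : ℝ) : ℝ≥0∞ :=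
  ∫⁻ x in (Ioo (-M) M)ᶜ, ENNReal.ofReal (x ^ 2) ∂μ

lemma tail_mono (μ : Measure ℝ) {M M' : ℝ} (h : M ≤ M') : tail μ M' ≤ tail μ M := by
  refine lintegral_mono_set ?_
  exact compl_subset_compl.2 (Ioo_subset_Ioo (by linarith) h)

lemma secondMoment_ne_top {μ : Measure ℝ} (h : MemW2Space μ) :
    ∫⁻ x, ENNReal.ofReal (x ^ 2) ∂μ ≠ ∞ := by
  have h2 := h.2.hasFiniteIntegral
  rw [HasFiniteIntegral] at h2
  refine ne_of_lt (lt_of_le_of_lt (lintegral_mono fun x => ?_) h2)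
  rw [Real.enorm_eq_ofReal (sq_nonneg x)]

lemma tail_tendsto {μ : Measure ℝ} (h : MemW2Space μ) :
    Tendsto (fun M : ℕ => tail μ M) atTop (nhds 0) := by
  have hx2meas : Measurable (fun x : ℝ => ENNReal.ofReal (x ^ 2)) :=
    ENNReal.measurable_ofReal.comp (measurable_id.pow_const 2)
  set ρ : Measure ℝ := μ.withDensity (fun x => ENNReal.ofReal (x ^ 2)) with hρ
  have happ : ∀ M : ℕ, tail μ M = ρ ((Ioo (-(M:ℝ)) M)ᶜ) := by
    intro M
    rw [hρ, withDensity_apply _ measurableSet_Ioo.compl]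
    rfl
  have hempty : ⋂ M : ℕ, (Ioo (-(M:ℝ)) M)ᶜ = ∅ := by
    ext x
    simp only [mem_iInter, mem_compl_iff, mem_Ioo, mem_empty_iff_false, iff_false, not_forall,
      not_not]
    obtain ⟨M, hM⟩ := exists_nat_gt |x| 
    exact ⟨M, by cases abs_lt.1 hM; constructor <;> linarith⟩
  have hρuniv : ρ univ ≠ ∞ := by
    rw [hρ, withDensity_apply _ MeasurableSet.univ, Measure.restrict_univ]
    exact secondMoment_ne_top h
  have htend := tendsto_measure_iInter_atTop (μ := ρ) (s := fun M : ℕ => (Ioo (-(M:ℝ)) M)ᶜ)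
    (fun M => measurableSet_Ioo.compl.nullMeasurableSet)
    (fun i j hij => compl_subset_compl.2 (Ioo_subset_Ioo
      (neg_le_neg (by exact_mod_cast hij)) (by exact_mod_cast hij)))
    ⟨0, ne_of_lt (lt_of_le_of_lt (measure_mono (subset_univ _))
      (lt_of_le_of_ne le_top hρuniv))⟩
  rw [hempty, measure_empty] at htend
  have : (fun M : ℕ => tail μ M) = ρ ∘ (fun M : ℕ => (Ioo (-(M:ℝ)) M)ᶜ) := by
    funext M; exact happ M
  rw [this]
  exact htend

lemma lintegral_sq_fst {π : Measure (ℝ × ℝ)} {μ : Measure ℝ} (h : π.map Prod.fst = μ)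
    {g : ℝ → ℝ≥0∞} (hg : Measurable g) : ∫⁻ p, g p.1 ∂π = ∫⁻ x, g x ∂μ := by
  rw [← h, lintegral_map hg measurable_fst]

lemma lintegral_sq_snd {π : Measure (ℝ × ℝ)} {ν : Measure ℝ} (h : π.map Prod.snd = ν)
    {g : ℝ → ℝ≥0∞} (hg : Measurable g) : ∫⁻ p, g p.2 ∂π = ∫⁻ x, g x ∂ν := by
  rw [← h, lintegral_map hg measurable_snd]

lemma cost_ne_top {π : Measure (ℝ × ℝ)} {μ ν : Measure ℝ} (h : IsCoupling π μ ν)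
    (hμ : MemW2Space μ) (hν : MemW2Space ν) : cost π ≠ ∞ := by
  have hx2meas : Measurable (fun x : ℝ => ENNReal.ofReal (x ^ 2)) :=
    ENNReal.measurable_ofReal.comp (measurable_id.pow_const 2)
  have hpt : ∀ p : ℝ × ℝ, ENNReal.ofReal ((p.1 - p.2) ^ 2)
      ≤ 2 * ENNReal.ofReal (p.1 ^ 2) + 2 * ENNReal.ofReal (p.2 ^ 2) := by
    intro p
    have h1 : (p.1 - p.2) ^ 2 ≤ 2 * p.1 ^ 2 + 2 * p.2 ^ 2 := by nlinarith [sq_nonneg (p.1 + p.2)]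
    calc ENNReal.ofReal ((p.1 - p.2) ^ 2) ≤ ENNReal.ofReal (2 * p.1 ^ 2 + 2 * p.2 ^ 2) :=
        ENNReal.ofReal_le_ofReal h1
      _ = 2 * ENNReal.ofReal (p.1 ^ 2) + 2 * ENNReal.ofReal (p.2 ^ 2) := by
        rw [ENNReal.ofReal_add (by positivity) (by positivity), ENNReal.ofReal_mul zero_le_two,
          ENNReal.ofReal_mul zero_le_two]
        norm_num
  have hma : Measurable fun p : ℝ × ℝ => ENNReal.ofReal (p.1 ^ 2) :=
    hx2meas.comp measurable_fst
  have hmb : Measurable fun p : ℝ × ℝ => ENNReal.ofReal (p.2 ^ 2) :=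
    hx2meas.comp measurable_snd
  refine ne_of_lt (lt_of_le_of_lt (lintegral_mono hpt) ?_)
  rw [lintegral_add_left (hma.const_mul 2),
    lintegral_const_mul _ hma, lintegral_const_mul _ hmb]
  have e1 : ∫⁻ p : ℝ × ℝ, ENNReal.ofReal (p.1 ^ 2) ∂π = ∫⁻ x, ENNReal.ofReal (x ^ 2) ∂μ :=
    lintegral_sq_fst h.1 hx2meas
  have e2 : ∫⁻ p : ℝ × ℝ, ENNReal.ofReal (p.2 ^ 2) ∂π = ∫⁻ x, ENNReal.ofReal (x ^ 2) ∂ν :=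
    lintegral_sq_snd h.2 hx2meas
  rw [e1, e2]
  have f1 := secondMoment_ne_top hμ
  have f2 := secondMoment_ne_top hν
  exact ENNReal.add_lt_top.2 ⟨ENNReal.mul_lt_top (by norm_num) (lt_of_le_of_ne le_top f1),
    ENNReal.mul_lt_top (by norm_num) (lt_of_le_of_ne le_top f2)⟩

lemma exists_coupling_of_W2_lt {μ ν : Measure ℝ} (hμ : MemW2Space μ) (hν : MemW2Space ν)
    {δ : ℝ} (hδ : 0 < δ) (h : W2 μ ν < δ) :
    ∃ π, IsCoupling π μ ν ∧ cost π < ENNReal.ofReal (δ ^ 2) := by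
  haveI := hμ.1
  haveI := hν.1
  have hne : Set.Nonempty ((fun π => (∫ p, (p.1 - p.2) ^ 2 ∂π) ^ ((1:ℝ)/2)) ''
      {π : Measure (ℝ × ℝ) | IsCoupling π μ ν}) := by
    refine ⟨_, ⟨μ.prod ν, ?_, rfl⟩⟩
    constructor
    · rw [Measure.map_fst_prod]; simp
    · rw [Measure.map_snd_prod]; simp
  rw [W2] at h
  obtain ⟨r, ⟨π, hπ, rfl⟩, hr⟩ := (csInf_lt_iff (W2_set_bddBelow μ ν) hne).1 h
  refine ⟨π, hπ, ?_⟩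
  have hcne : cost π ≠ ∞ := cost_ne_top hπ hμ hν
  dsimp only at hr
  rw [integral_cost_eq, ← Real.sqrt_eq_rpow] at hr
  have h2 : (cost π).toReal < δ ^ 2 := (Real.sqrt_lt' hδ).1 hr
  rw [← ENNReal.ofReal_toReal hcne]
  exact (ENNReal.ofReal_lt_ofReal_iff (by positivity)).2 h2

lemma tail_comparison {π : Measure (ℝ × ℝ)} {ν₁ μ : Measure ℝ} (h : IsCoupling π ν₁ μ)
    {M : ℝ} (hM : 0 ≤ M) : tail ν₁ (2 * M) ≤ 6 * cost π + 2 * tail μ M := by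
  have hx2meas : Measurable (fun x : ℝ => ENNReal.ofReal (x ^ 2)) :=
    ENNReal.measurable_ofReal.comp (measurable_id.pow_const 2)
  set g2 : ℝ → ℝ≥0∞ := (Ioo (-(2*M)) (2*M))ᶜ.indicator (fun x => ENNReal.ofReal (x ^ 2)) with hg2
  set g1 : ℝ → ℝ≥0∞ := (Ioo (-M) M)ᶜ.indicator (fun x => ENNReal.ofReal (x ^ 2)) with hg1
  have hg2meas : Measurable g2 := hx2meas.indicator measurableSet_Ioo.compl
  have hg1meas : Measurable g1 := hx2meas.indicator measurableSet_Ioo.compl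
  have hpt : ∀ p : ℝ × ℝ, g2 p.1 ≤ 6 * ENNReal.ofReal ((p.1 - p.2) ^ 2) + 2 * g1 p.2 := by
    intro p
    by_cases hx : p.1 ∈ (Ioo (-(2*M)) (2*M))ᶜ
    · rw [hg2, indicator_of_mem hx]
      by_cases hy : p.2 ∈ (Ioo (-M) M)ᶜ
      · rw [hg1, indicator_of_mem hy]
        have h1 : p.1 ^ 2 ≤ 6 * (p.1 - p.2) ^ 2 + 2 * p.2 ^ 2 := by
          nlinarith [sq_nonneg (p.1 - 2*p.2), sq_nonneg (p.1 - p.2), sq_nonneg p.2]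
        calc ENNReal.ofReal (p.1 ^ 2)
            ≤ ENNReal.ofReal (6 * (p.1 - p.2) ^ 2 + 2 * p.2 ^ 2) := ENNReal.ofReal_le_ofReal h1
          _ = 6 * ENNReal.ofReal ((p.1 - p.2) ^ 2) + 2 * ENNReal.ofReal (p.2 ^ 2) := by
              rw [ENNReal.ofReal_add (by positivity) (by positivity),
                ENNReal.ofReal_mul (by norm_num), ENNReal.ofReal_mul (by norm_num)]
              norm_num
      · -- |p.2| < M, |p.1| ≥ 2M
        simp only [mem_compl_iff, mem_Ioo, not_and_or, not_lt] at hx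
        simp only [mem_compl_iff, not_not, mem_Ioo] at hy
        have h1 : p.1 ^ 2 ≤ 6 * (p.1 - p.2) ^ 2 := by
          rcases hx with hx | hx
          · nlinarith [hy.1, hy.2, hM]
          · nlinarith [hy.1, hy.2, hM]
        calc ENNReal.ofReal (p.1 ^ 2) ≤ ENNReal.ofReal (6 * (p.1 - p.2) ^ 2) :=
            ENNReal.ofReal_le_ofReal h1
          _ = 6 * ENNReal.ofReal ((p.1 - p.2) ^ 2) := by
              rw [ENNReal.ofReal_mul (by norm_num)]; norm_num
          _ ≤ 6 * ENNReal.ofReal ((p.1 - p.2) ^ 2) + 2 * g1 p.2 := le_self_add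
    · rw [hg2, indicator_of_notMem hx]
      exact zero_le
  calc tail ν₁ (2 * M) = ∫⁻ x, g2 x ∂ν₁ := by
        rw [tail, hg2, lintegral_indicator measurableSet_Ioo.compl]
    _ = ∫⁻ p, g2 p.1 ∂π := (lintegral_sq_fst h.1 hg2meas).symm
    _ ≤ ∫⁻ p, (6 * ENNReal.ofReal ((p.1 - p.2) ^ 2) + 2 * g1 p.2) ∂π := lintegral_mono hpt
    _ = 6 * cost π + 2 * ∫⁻ p, g1 p.2 ∂π := by
        have hmc : Measurable fun p : ℝ × ℝ => ENNReal.ofReal ((p.1 - p.2) ^ 2) :=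
          ENNReal.measurable_ofReal.comp ((measurable_fst.sub measurable_snd).pow_const 2)
        have hmd : Measurable fun p : ℝ × ℝ => g1 p.2 := hg1meas.comp measurable_snd
        rw [lintegral_add_left (hmc.const_mul 6),
          lintegral_const_mul _ hmc, lintegral_const_mul _ hmd]
        rfl
    _ = 6 * cost π + 2 * tail μ M := by
        rw [lintegral_sq_snd h.2 hg1meas, tail, hg1, lintegral_indicator measurableSet_Ioo.compl]

lemma uniform_tail {Δ₀ : Set (Measure ℝ)} (hΔ₀ : W2Compact Δ₀) {F : ℕ → Measure ℝ}
    (hF : ∀ n, F n ∈ Δ₀) {δ : ℝ} (hδ : 0 < δ) :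
    ∃ M : ℝ, 1 ≤ M ∧ ∀ n, tail (F n) M ≤ ENNReal.ofReal δ := by
  by_contra hcon
  push_neg at hcon
  choose nn hnn using fun j : ℕ => hcon ((j:ℝ) + 1)
    (by have := Nat.cast_nonneg (α := ℝ) j; linarith)
  obtain ⟨φ, hφ, μ0, hμ0, htend⟩ := hΔ₀.2 (fun j => F (nn j)) (fun j => hF (nn j))
  have hμ0W2 := hΔ₀.1 μ0 hμ0
  have htail0 := tail_tendsto hμ0W2
  have hε₀pos : (0:ℝ≥0∞) < ENNReal.ofReal (δ/8) := ENNReal.ofReal_pos.2 (by linarith)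
  obtain ⟨M₀, hM₀⟩ := (htail0.eventually_lt_const hε₀pos).exists
  set δ' : ℝ := Real.sqrt (δ/16) with hδ'def
  have hδ'pos : 0 < δ' := Real.sqrt_pos.2 (by linarith)
  have hδ'sq : δ' ^ 2 = δ/16 := Real.sq_sqrt (by linarith)
  have hev1 : ∀ᶠ k in atTop, W2 (F (nn (φ k))) μ0 < δ' := htend.eventually_lt_const hδ'pos
  have hev2 : ∀ᶠ k in atTop, 2 * (M₀:ℝ) ≤ (φ k : ℝ) + 1 := by
    refine eventually_atTop.2 ⟨2 * M₀, fun k hk => ?_⟩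
    have h1 : 2 * M₀ ≤ φ k := le_trans hk (hφ.le_apply)
    have h2 : (2 * M₀ : ℝ) ≤ (φ k : ℝ) := by exact_mod_cast h1
    push_cast
    linarith
  obtain ⟨k, hk1, hk2⟩ := (hev1.and hev2).exists
  have hGk : MemW2Space (F (nn (φ k))) := hΔ₀.1 _ (hF _)
  obtain ⟨π, hπcoup, hπcost⟩ := exists_coupling_of_W2_lt hGk hμ0W2 hδ'pos hk1
  have hcomp := tail_comparison hπcoup (M := (M₀:ℝ)) (Nat.cast_nonneg M₀)
  have hchain : tail (F (nn (φ k))) ((φ k : ℝ) + 1) ≤ ENNReal.ofReal δ := by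
    calc tail (F (nn (φ k))) ((φ k : ℝ) + 1) ≤ tail (F (nn (φ k))) (2 * M₀) :=
          tail_mono _ hk2
      _ ≤ 6 * cost π + 2 * tail μ0 M₀ := hcomp
      _ ≤ 6 * ENNReal.ofReal (δ' ^ 2) + 2 * ENNReal.ofReal (δ/8) :=
          add_le_add (mul_le_mul_right hπcost.le _) (mul_le_mul_right hM₀.le _)
      _ = ENNReal.ofReal (6 * (δ/16) + 2 * (δ/8)) := by
          rw [hδ'sq, ENNReal.ofReal_add (by linarith) (by linarith),
            ENNReal.ofReal_mul (by norm_num), ENNReal.ofReal_mul (by norm_num)]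
          norm_num
      _ ≤ ENNReal.ofReal δ := ENNReal.ofReal_le_ofReal (by linarith)
  exact absurd hchain (not_le.2 (hnn (φ k)))


lemma emp_isProb {n : ℕ} (hn : 0 < n) (ω : Fin n → ℝ) :
    IsProbabilityMeasure (empiricalMeasure n ω) := by
  constructor
  rw [empiricalMeasure, Measure.smul_apply, Measure.finset_sum_apply]
  simp only [measure_univ, smul_eq_mul]
  rw [Finset.sum_const, Finset.card_univ, Fintype.card_fin, nsmul_eq_mul, mul_one]
  exact ENNReal.inv_mul_cancel (by exact_mod_cast hn.ne') (ENNReal.natCast_ne_top n)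

lemma emp_lintegral {n : ℕ} (ω : Fin n → ℝ) {g : ℝ → ℝ≥0∞} (hg : Measurable g) :
    ∫⁻ x, g x ∂(empiricalMeasure n ω) = (n : ℝ≥0∞)⁻¹ * ∑ i, g (ω i) := by
  rw [empiricalMeasure, lintegral_smul_measure, lintegral_finset_sum_measure]
  congr 1
  exact Finset.sum_congr rfl fun i _ => lintegral_dirac' _ hg

lemma emp_apply {n : ℕ} (ω : Fin n → ℝ) {s : Set ℝ} (hs : MeasurableSet s) :
    empiricalMeasure n ω s = (n : ℝ≥0∞)⁻¹ * ∑ i, s.indicator (fun _ => (1:ℝ≥0∞)) (ω i) := by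
  rw [empiricalMeasure, Measure.smul_apply, Measure.finset_sum_apply]
  simp only [smul_eq_mul]
  congr 1
  refine Finset.sum_congr rfl fun i _ => ?_
  rw [Measure.dirac_apply' _ hs]
  rfl

lemma indicator_ofReal (s : Set ℝ) (x : ℝ) :
    s.indicator (fun _ => (1:ℝ≥0∞)) x = ENNReal.ofReal (s.indicator (fun _ => (1:ℝ)) x) := by
  by_cases hx : x ∈ s <;> simp [indicator_of_mem, indicator_of_notMem, hx]

lemma emp_apply_toReal {n : ℕ} (hn : 0 < n) (ω : Fin n → ℝ) {s : Set ℝ}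
    (hs : MeasurableSet s) :
    (empiricalMeasure n ω s).toReal = (∑ i, s.indicator (fun _ => (1:ℝ)) (ω i)) / n := by
  rw [emp_apply ω hs]
  have h1 : ∑ i, s.indicator (fun _ => (1:ℝ≥0∞)) (ω i)
      = ENNReal.ofReal (∑ i, s.indicator (fun _ => (1:ℝ)) (ω i)) := by
    rw [ENNReal.ofReal_sum_of_nonneg (fun i _ => indicator_nonneg (fun _ _ => zero_le_one) _)]
    exact Finset.sum_congr rfl fun i _ => indicator_ofReal s (ω i)
  have hn' : (0:ℝ) < n := by exact_mod_cast hn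
  rw [h1, ← ENNReal.ofReal_natCast n, ← ENNReal.ofReal_inv_of_pos hn',
    ← ENNReal.ofReal_mul (by positivity)]
  rw [ENNReal.toReal_ofReal (mul_nonneg (inv_nonneg.2 hn'.le)
    (Finset.sum_nonneg fun i _ => indicator_nonneg (fun _ _ => zero_le_one) _))]
  rw [inv_mul_eq_div]



set_option maxHeartbeats 2000000 in
/-- Bootstrap consistency in Wasserstein-2: if `F n` lies in a fixed
`W2`-compact set `Δ₀` and `X_1, …, X_n` are i.i.d. `F n` with empirical distribution
`F̂ n`, then `ρ₂(F n, F̂ n) → 0` in probability. -/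
theorem bootstrap_wasserstein_consistency
    (Δ₀ : Set (Measure ℝ)) (hΔ₀ : W2Compact Δ₀)
    (F : ℕ → Measure ℝ) (hF : ∀ n, F n ∈ Δ₀) :
    ∀ ε > (0:ℝ),
      Tendsto (fun n => (Measure.pi fun _ : Fin n => F n)
          {ω | ε ≤ W2 (F n) (empiricalMeasure n ω)}) atTop (nhds 0) := by
  intro ε hε
  rw [ENNReal.tendsto_atTop_zero]
  intro θ hθ
  obtain ⟨θ', hθ'pos, hθ'le⟩ : ∃ θ' : ℝ, 0 < θ' ∧ ENNReal.ofReal θ' ≤ θ := by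
    by_cases htop : θ = ∞
    · exact ⟨1, one_pos, by simp [htop]⟩
    · exact ⟨θ.toReal, ENNReal.toReal_pos hθ.ne' htop, le_of_eq (ENNReal.ofReal_toReal htop)⟩
  suffices h : ∀ᶠ n in atTop, (Measure.pi fun _ : Fin n => F n)
      {ω | ε ≤ W2 (F n) (empiricalMeasure n ω)} ≤ ENNReal.ofReal θ' by
    exact eventually_atTop.1 (h.mono fun n hn => le_trans hn hθ'le)
  classical
  -- parameters
  set η : ℝ := ε/4 with hη
  have hηpos : 0 < η := by positivity
  set δ : ℝ := min (ε^2/16) ((θ'/4) * (ε^2/16)) with hδ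
  have hδpos : 0 < δ := lt_min (by positivity) (by positivity)
  obtain ⟨M, hM1, hMtail⟩ := uniform_tail hΔ₀ hF hδpos
  have hMpos : 0 < M := lt_of_lt_of_le one_pos hM1
  set K : ℕ := ⌈2*M/η⌉₊ with hK
  have hKpos : 0 < K := Nat.one_le_ceil_iff.2 (by positivity)
  have hKR : (0:ℝ) < K := by exact_mod_cast hKpos
  have hKη : 2*M ≤ K*η := by
    have h1 := Nat.le_ceil (2*M/η)
    calc 2*M = (2*M/η)*η := by field_simp
      _ ≤ K*η := mul_le_mul_of_nonneg_right h1 hηpos.le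
  set M' : ℝ := M + K*η with hM'
  have hM'pos : 0 < M' := by positivity
  set bins : Fin K → Set ℝ := fun j => Set.Ico (-M + j*η) (-M + (j+1)*η) with hbins
  have hbmeas : ∀ j, MeasurableSet (bins j) := fun j => measurableSet_Ico
  have hbdisj : Pairwise (Function.onFun Disjoint bins) := by
    intro i j hij
    have key : ∀ i j : Fin K, (i:ℕ) < (j:ℕ) → Disjoint (bins i) (bins j) := by
      intro i j hlt
      refine Set.disjoint_left.2 fun x hxi hxj => ?_
      rw [hbins] at hxi hxj
      have h1 : x < -M + ((i:ℝ)+1)*η := hxi.2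
      have h2 : -M + (j:ℝ)*η ≤ x := hxj.1
      have h3 : ((i:ℝ)+1) ≤ (j:ℝ) := by exact_mod_cast hlt
      nlinarith
    rcases lt_or_gt_of_ne (fun h => hij (Fin.ext h) : (i:ℕ) ≠ (j:ℕ)) with h | h
    · exact key i j h
    · exact (key j i h).symm
  have hdiam : ∀ j, ∀ x ∈ bins j, ∀ y ∈ bins j, (x - y)^2 ≤ η^2 := by
    intro j x hx y hy
    rw [hbins] at hx hy
    obtain ⟨hx1, hx2⟩ := hx
    obtain ⟨hy1, hy2⟩ := hy
    nlinarith
  have hbd : ∀ j, ∀ x ∈ bins j, x^2 ≤ M'^2 := by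
    intro j x hx
    rw [hbins] at hx
    obtain ⟨hx1, hx2⟩ := hx
    have hj : ((j:ℕ):ℝ) + 1 ≤ K := by exact_mod_cast j.isLt
    have h2 : x < -M + ((j:ℝ)+1)*η := hx2
    have h3 : ((j:ℝ)+1)*η ≤ K*η := mul_le_mul_of_nonneg_right hj hηpos.le
    have h4 : -M' ≤ x := by
      rw [hM']
      have : (0:ℝ) ≤ (j:ℝ)*η := by positivity
      nlinarith
    have h5 : x ≤ M' := by rw [hM']; nlinarith
    nlinarith
  set U : Set ℝ := ⋃ j, bins j with hU
  have hUmeas : MeasurableSet U := MeasurableSet.iUnion hbmeas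
  have hUc : Uᶜ ⊆ (Set.Ioo (-M) M)ᶜ := by
    refine Set.compl_subset_compl.2 fun x hx => ?_
    obtain ⟨hx1, hx2⟩ := hx
    set j : ℕ := ⌊(x+M)/η⌋₊ with hj
    have hxM : (0:ℝ) < x + M := by linarith
    have hj1 : (j:ℝ) ≤ (x+M)/η := Nat.floor_le (by positivity)
    have hj2 : (x+M)/η < (j:ℝ) + 1 := Nat.lt_floor_add_one _
    have hjK : j < K := by
      have h1 : (j:ℝ) < (K:ℝ) := by
        calc (j:ℝ) ≤ (x+M)/η := hj1
          _ < 2*M/η := by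
            rw [div_lt_div_iff_of_pos_right hηpos]
            linarith
          _ ≤ K := by
            rw [div_le_iff₀ hηpos]
            linarith [hKη]
      exact_mod_cast h1
    refine Set.mem_iUnion.2 ⟨⟨j, hjK⟩, ?_⟩
    rw [hbins]
    constructor
    · have := mul_le_mul_of_nonneg_right hj1 hηpos.le
      rw [div_mul_cancel₀ _ hηpos.ne'] at this
      simpa using by linarith
    · have := mul_lt_mul_of_pos_right hj2 hηpos
      rw [div_mul_cancel₀ _ hηpos.ne'] at this
      simpa using by linarith
  set cA : ℝ := ε^2/(64 * M'^2 * K) with hcA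
  have hcApos : 0 < cA := by positivity
  set N₀ : ℕ := ⌈(2*(K:ℝ))/(θ'*cA^2)⌉₊ with hN₀
  refine eventually_atTop.2 ⟨max 1 N₀, fun n hn => ?_⟩
  have hn1 : 0 < n := lt_of_lt_of_le one_pos (le_trans (le_max_left _ _) hn)
  have hnN₀ : N₀ ≤ n := le_trans (le_max_right _ _) hn
  have hnR : (0:ℝ) < n := by exact_mod_cast hn1
  haveI instμ : IsProbabilityMeasure (F n) := (hΔ₀.1 _ (hF n)).1
  set P : Measure (Fin n → ℝ) := Measure.pi fun _ : Fin n => F n with hP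
  -- events
  set A : Fin K → Set (Fin n → ℝ) := fun j =>
    {ω | cA ≤ |(F n (bins j)).toReal - (∑ i, (bins j).indicator (fun _ => (1:ℝ)) (ω i)) / n|}
    with hA
  set Etail : (Fin n → ℝ) → ℝ≥0∞ := fun ω =>
    ∫⁻ x in Uᶜ, ENNReal.ofReal (x^2) ∂(empiricalMeasure n ω) with hEtail
  set B : Set (Fin n → ℝ) := {ω | ENNReal.ofReal (ε^2/16) ≤ Etail ω} with hB
  -- inclusion
  have hsub : {ω : Fin n → ℝ | ε ≤ W2 (F n) (empiricalMeasure n ω)} ⊆ (⋃ j, A j) ∪ B := by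
    intro ω hω
    by_contra hnot
    rw [Set.mem_union] at hnot
    push_neg at hnot
    obtain ⟨hnotA, hnotB⟩ := hnot
    rw [Set.mem_iUnion] at hnotA
    push_neg at hnotA
    haveI := emp_isProb hn1 ω
    obtain ⟨π, hπc, hπb⟩ := exists_good_coupling (F n) (empiricalMeasure n ω)
      hbmeas hbdisj hdiam hbd
    have hd_bound : ∀ j, ENNReal.ofReal
        |(F n (bins j)).toReal - (empiricalMeasure n ω (bins j)).toReal| ≤ ENNReal.ofReal cA := by
      intro j
      have h1 := hnotA j
      rw [hA, Set.mem_setOf_eq, not_le] at h1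
      rw [emp_apply_toReal hn1 ω (hbmeas j)]
      exact ENNReal.ofReal_le_ofReal h1.le
    have hterm2 : 4 * ENNReal.ofReal (M'^2) * (∑ j, ENNReal.ofReal
        |(F n (bins j)).toReal - (empiricalMeasure n ω (bins j)).toReal|)
        ≤ ENNReal.ofReal (ε^2/16) := by
      calc 4 * ENNReal.ofReal (M'^2) * (∑ j, ENNReal.ofReal
          |(F n (bins j)).toReal - (empiricalMeasure n ω (bins j)).toReal|)
          ≤ 4 * ENNReal.ofReal (M'^2) * (∑ _j : Fin K, ENNReal.ofReal cA) :=
            mul_le_mul_right (Finset.sum_le_sum fun j _ => hd_bound j) _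
        _ = ENNReal.ofReal (4 * M'^2 * (K * cA)) := by
            rw [Finset.sum_const, Finset.card_univ, Fintype.card_fin, nsmul_eq_mul]
            rw [ENNReal.ofReal_mul (by positivity : (0:ℝ) ≤ 4 * M'^2),
              ENNReal.ofReal_mul (by positivity : (0:ℝ) ≤ 4),
              ENNReal.ofReal_mul (by positivity : (0:ℝ) ≤ (K:ℝ)), ENNReal.ofReal_natCast]
            norm_num [mul_assoc]
        _ = ENNReal.ofReal (ε^2/16) := by
            congr 1
            rw [hcA]
            field_simp
            ring
    have hterm3 : (∫⁻ x in Uᶜ, ENNReal.ofReal (x^2) ∂(F n)) ≤ ENNReal.ofReal (ε^2/16) := by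
      calc (∫⁻ x in Uᶜ, ENNReal.ofReal (x^2) ∂(F n))
          ≤ ∫⁻ x in (Set.Ioo (-M) M)ᶜ, ENNReal.ofReal (x^2) ∂(F n) := lintegral_mono_set hUc
        _ ≤ ENNReal.ofReal δ := hMtail n
        _ ≤ ENNReal.ofReal (ε^2/16) := ENNReal.ofReal_le_ofReal (min_le_left _ _)
    have hterm4 : Etail ω ≤ ENNReal.ofReal (ε^2/16) := by
      have h1 := hnotB
      rw [hB, Set.mem_setOf_eq, not_le] at h1
      exact h1.le
    have hcost : cost π ≤ ENNReal.ofReal (3*ε^2/8) := by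
      calc cost π ≤ ENNReal.ofReal (η^2)
          + 4 * ENNReal.ofReal (M'^2) * (∑ j, ENNReal.ofReal
            |(F n (bins j)).toReal - (empiricalMeasure n ω (bins j)).toReal|)
          + 2 * (∫⁻ x in Uᶜ, ENNReal.ofReal (x^2) ∂(F n))
          + 2 * (∫⁻ x in Uᶜ, ENNReal.ofReal (x^2) ∂(empiricalMeasure n ω)) := hπb
        _ ≤ ENNReal.ofReal (ε^2/16) + ENNReal.ofReal (ε^2/16)
            + 2 * ENNReal.ofReal (ε^2/16) + 2 * ENNReal.ofReal (ε^2/16) := by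
            refine add_le_add (add_le_add (add_le_add ?_ hterm2)
              (mul_le_mul_right hterm3 _)) (mul_le_mul_right hterm4 _)
            refine ENNReal.ofReal_le_ofReal ?_
            rw [hη]
            nlinarith
        _ = ENNReal.ofReal (3*ε^2/8) := by
            rw [two_mul (ENNReal.ofReal (ε^2/16)),
              ← ENNReal.ofReal_add (by positivity) (by positivity),
              ← ENNReal.ofReal_add (by positivity) (by positivity),
              ← ENNReal.ofReal_add (by positivity) (by positivity)]
            congr 1
            ring
    have hW2lt : W2 (F n) (empiricalMeasure n ω) < ε :=
      W2_lt_of_coupling hπc (by positivity) (by nlinarith) hε hcost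
    rw [Set.mem_setOf_eq] at hω
    linarith
  -- probability bounds
  have hAbound : ∀ j, P (A j) ≤ ENNReal.ofReal (1/(n * cA^2)) := fun j =>
    chebyshev_prop hn1 (F n) (hbmeas j) hcApos
  have hEform : ∀ ω : Fin n → ℝ, Etail ω
      = (n : ℝ≥0∞)⁻¹ * ∑ i, (Uᶜ.indicator (fun x => ENNReal.ofReal (x^2))) (ω i) := by
    intro ω
    show (∫⁻ x in Uᶜ, ENNReal.ofReal (x^2) ∂(empiricalMeasure n ω)) = _
    have hindm : Measurable (Uᶜ.indicator (fun x : ℝ => ENNReal.ofReal (x^2))) :=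
      (ENNReal.measurable_ofReal.comp (measurable_id.pow_const 2)).indicator hUmeas.compl
    rw [← lintegral_indicator hUmeas.compl, emp_lintegral ω hindm]
  have hindm : Measurable (Uᶜ.indicator (fun x : ℝ => ENNReal.ofReal (x^2))) :=
    (ENNReal.measurable_ofReal.comp (measurable_id.pow_const 2)).indicator hUmeas.compl
  have hEmeas : Measurable Etail := by
    have : Etail = fun ω : Fin n → ℝ =>
        (n : ℝ≥0∞)⁻¹ * ∑ i, (Uᶜ.indicator (fun x => ENNReal.ofReal (x^2))) (ω i) :=
      funext hEform
    rw [this]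
    exact (Finset.measurable_sum _ fun i _ =>
      hindm.comp (measurable_pi_apply i)).const_mul _
  have hEint : ∫⁻ ω, Etail ω ∂P = ∫⁻ x in Uᶜ, ENNReal.ofReal (x^2) ∂(F n) := by
    have h1 : ∫⁻ ω, Etail ω ∂P = (n : ℝ≥0∞)⁻¹ *
        ∑ i : Fin n, ∫⁻ ω, (Uᶜ.indicator (fun x => ENNReal.ofReal (x^2))) (ω i) ∂P := by
      simp_rw [hEform]
      rw [lintegral_const_mul' _ _ (ENNReal.inv_ne_top.2 (by exact_mod_cast hn1.ne'))]
      congr 1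
      exact lintegral_finset_sum _ fun i _ => hindm.comp (measurable_pi_apply i)
    rw [h1]
    have h2 : ∀ i : Fin n, ∫⁻ ω, (Uᶜ.indicator (fun x => ENNReal.ofReal (x^2))) (ω i) ∂P
        = ∫⁻ x in Uᶜ, ENNReal.ofReal (x^2) ∂(F n) := by
      intro i
      rw [hP, lintegral_eval (F n) i hindm, lintegral_indicator hUmeas.compl]
    rw [Finset.sum_congr rfl fun i _ => h2 i, Finset.sum_const, Finset.card_univ,
      Fintype.card_fin, nsmul_eq_mul, ← mul_assoc,
      ENNReal.inv_mul_cancel (by exact_mod_cast hn1.ne') (ENNReal.natCast_ne_top n), one_mul]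
  have hBbound : P B ≤ ENNReal.ofReal (θ'/4) := by
    have hc0 : ENNReal.ofReal (ε^2/16) ≠ 0 := (ENNReal.ofReal_pos.2 (by positivity)).ne'
    have hmarkov := meas_ge_le_lintegral_div (μ := P) hEmeas.aemeasurable hc0
      ENNReal.ofReal_ne_top
    calc P B ≤ (∫⁻ ω, Etail ω ∂P) / ENNReal.ofReal (ε^2/16) := hmarkov
      _ ≤ ENNReal.ofReal δ / ENNReal.ofReal (ε^2/16) := by
          rw [hEint]
          exact ENNReal.div_le_div_right (le_trans (lintegral_mono_set hUc) (hMtail n)) _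
      _ ≤ ENNReal.ofReal ((θ'/4) * (ε^2/16)) / ENNReal.ofReal (ε^2/16) :=
          ENNReal.div_le_div_right (ENNReal.ofReal_le_ofReal (min_le_right _ _)) _
      _ = ENNReal.ofReal (θ'/4) := by
          rw [ENNReal.ofReal_mul (by positivity), mul_div_assoc,
            ENNReal.div_self hc0 ENNReal.ofReal_ne_top, mul_one]
  have hsumA : ∑ j : Fin K, P (A j) ≤ ENNReal.ofReal (θ'/2) := by
    have hKn : (2*(K:ℝ))/(θ'*cA^2) ≤ (n:ℝ) := by
      have h0 : ((N₀:ℕ):ℝ) ≤ (n:ℝ) := by exact_mod_cast hnN₀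
      refine le_trans ?_ h0
      rw [hN₀]
      exact Nat.le_ceil _
    have hfrac : (K:ℝ) * (1/(n * cA^2)) ≤ θ'/2 := by
      rw [mul_one_div, div_le_div_iff₀ (by positivity) (by norm_num)]
      have h1 : 2*K/(θ'*cA^2) * (θ'*cA^2) ≤ (n:ℝ) * (θ'*cA^2) :=
        mul_le_mul_of_nonneg_right hKn (by positivity)
      rw [div_mul_cancel₀ _ (by positivity : θ'*cA^2 ≠ 0)] at h1
      nlinarith
    calc ∑ j : Fin K, P (A j) ≤ ∑ _j : Fin K, ENNReal.ofReal (1/(n * cA^2)) :=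
          Finset.sum_le_sum fun j _ => hAbound j
      _ = ENNReal.ofReal ((K:ℝ) * (1/(n * cA^2))) := by
          rw [Finset.sum_const, Finset.card_univ, Fintype.card_fin, nsmul_eq_mul,
            ENNReal.ofReal_mul (by positivity), ENNReal.ofReal_natCast]
      _ ≤ ENNReal.ofReal (θ'/2) := ENNReal.ofReal_le_ofReal hfrac
  calc P {ω | ε ≤ W2 (F n) (empiricalMeasure n ω)} ≤ P ((⋃ j, A j) ∪ B) := measure_mono hsub
    _ ≤ P (⋃ j, A j) + P B := measure_union_le _ _
    _ ≤ (∑ j : Fin K, P (A j)) + P B := by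
        refine add_le_add ?_ le_rfl
        calc P (⋃ j, A j) ≤ ∑' j : Fin K, P (A j) := measure_iUnion_le _
          _ = ∑ j : Fin K, P (A j) := tsum_fintype _
    _ ≤ ENNReal.ofReal (θ'/2) + ENNReal.ofReal (θ'/4) := add_le_add hsumA hBbound
    _ = ENNReal.ofReal (θ'/2 + θ'/4) := (ENNReal.ofReal_add (by positivity) (by positivity)).symm
    _ ≤ ENNReal.ofReal θ' := ENNReal.ofReal_le_ofReal (by linarith)
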